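/- (Caccioppoli-type inequality with negative exponents.) In the modified splitting setting described below, for every integer l ≥ 1 and every α > −1/2 there exists a constant c = c(α, l) > 0, independent of δ, u, and η, such that for every η ∈ C_c^∞(Ω) with 0 ≤ η ≤ 1: ∫_Ω D²f_δ(∇u)(∇∂₁u, ∇∂₁u) η^{2l} Γ₁^{α} dx ≤ c ∫_Ω D²f_δ(∇u)(∇η, ∇η) η^{2l−2} Γ₁^{α+1} dx. -/

import Mathlib

open Real MeasureTheory

/-- Partial derivative of `v : ℝ² → ℝ` in the `i`-th coordinate direction. -/
noncomputable def pd (i : Fin 2) (v : EuclideanSpace ℝ (Fin 2) → ℝ)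
    (x : EuclideanSpace ℝ (Fin 2)) : ℝ :=
  fderiv ℝ v x (EuclideanSpace.single i 1)

/-!
Write `w = ∂₁u`, `Γ₁ = 1 + w²` and `a, b` for the two diagonal entries of `D²f_δ(∇u)`.
Differentiating the Euler equation in `x₁` gives `∫ a ∂₁w ∂₁φ + b ∂₂w ∂₂φ = 0` for every test
function `φ` supported in `Ω`: one integration by parts moves `∂₁` off the flux `f_{2,δ}'(∂₂u)`
onto `φ`, and what is left is the equation `a ∂₁₁u + b ∂₂₂u = 0` multiplied by `∂₁φ`. Test with
`φ = w η^{2l} Γ₁^α`, for which `∇φ = η^{2l} Γ₁^{α-1} (1 + (1 + 2α) w²) ∇w + 2l w η^{2l-1} Γ₁^α ∇η`.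
Since `α > -1/2` the first part is coercive, `1 + (1 + 2α) w² ≥ ε Γ₁` with `ε = min 1 (1 + 2α)`,
and Young's inequality together with `w² ≤ Γ₁` absorbs the cross term into half of it, giving the
constant `4 l² / ε²`.
-/

open scoped ContDiff

local notation "ℝ²" => EuclideanSpace ℝ (Fin 2)

section PartialDerivatives

variable {v w : ℝ² → ℝ} {x : ℝ²}

theorem HasFDerivAt.pd_eq {L : ℝ² →L[ℝ] ℝ} (h : HasFDerivAt v L x) (i : Fin 2) :
    pd i v x = L (EuclideanSpace.single i 1) := by
  rw [pd, h.fderiv]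

theorem ContDiff.contDiff_pd {m n : WithTop ℕ∞} (hv : ContDiff ℝ n v) (hmn : m + 1 ≤ n)
    (i : Fin 2) : ContDiff ℝ m (pd i v) :=
  (hv.fderiv_right hmn).clm_apply contDiff_const

theorem pd_fun_mul (hv : DifferentiableAt ℝ v x) (hw : DifferentiableAt ℝ w x) (i : Fin 2) :
    pd i (fun y => v y * w y) x = pd i v x * w x + v x * pd i w x := by
  have h : HasFDerivAt (fun y => v y * w y) _ x := hv.hasFDerivAt.mul hw.hasFDerivAt
  rw [h.pd_eq]
  simp only [add_apply, smul_apply, smul_eq_mul, pd]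
  ring

theorem HasDerivAt.pd_comp {G : ℝ → ℝ} {G' : ℝ} (hG : HasDerivAt G G' (v x))
    (hv : DifferentiableAt ℝ v x) (i : Fin 2) :
    pd i (fun y => G (v y)) x = G' * pd i v x := by
  have h : HasFDerivAt (fun y => G (v y)) _ x := hG.comp_hasFDerivAt x hv.hasFDerivAt
  rw [h.pd_eq]
  simp [pd]

theorem pd_comm (hv : ContDiff ℝ 2 v) (i j : Fin 2) (x : ℝ²) :
    pd i (pd j v) x = pd j (pd i v) x := by
  have hd : DifferentiableAt ℝ (fderiv ℝ v) x :=
    ((hv.fderiv_right (m := 1) le_rfl).differentiable one_ne_zero) x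
  have hsnd : ∀ i j : Fin 2, pd i (pd j v) x =
      fderiv ℝ (fderiv ℝ v) x (EuclideanSpace.single i 1) (EuclideanSpace.single j 1) := by
    intro i j
    have hpd : pd j v = fun y => fderiv ℝ v y (EuclideanSpace.single j 1) := rfl
    simp [pd, hpd, fderiv_clm_apply hd (differentiableAt_const _)]
  rw [hsnd, hsnd, (hv.contDiffAt.isSymmSndFDerivAt (by simp)).eq]

theorem ContDiff.continuous_pd (hv : ContDiff ℝ 1 v) (i : Fin 2) : Continuous (pd i v) :=
  (hv.continuous_fderiv one_ne_zero).clm_apply continuous_const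

theorem pd_eq_zero_of_notMem_tsupport (h : x ∉ tsupport v) (i : Fin 2) : pd i v x = 0 := by
  simp [pd, fderiv_of_notMem_tsupport ℝ h]

theorem integrable_pd_mul (hv : ContDiff ℝ 1 v) (hvc : HasCompactSupport v) (hw : Continuous w)
    (i : Fin 2) : Integrable (fun x => pd i v x * w x) :=
  ((hv.continuous_pd i).mul hw).integrable_of_hasCompactSupport
    (hvc.fderiv_apply ℝ _).mul_right

theorem integral_pd_mul_pd_comm (hv : ContDiff ℝ 2 v) (hvc : HasCompactSupport v)
    (hw : ContDiff ℝ 1 w) (i j : Fin 2) :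
    ∫ x, pd i v x * pd j w x = ∫ x, pd j v x * pd i w x := by
  have hv1 : ContDiff ℝ 1 v := hv.of_le (by norm_num)
  have ibp : ∀ i j : Fin 2, ∫ x, pd i v x * pd j w x = -∫ x, pd j (pd i v) x * w x := fun i j =>
    integral_mul_fderiv_eq_neg_fderiv_mul_of_integrable
      (integrable_pd_mul (hv.contDiff_pd (m := 1) le_rfl i) (hvc.fderiv_apply ℝ _) hw.continuous j)
      (integrable_pd_mul hv1 hvc (hw.continuous_pd j) i)
      (integrable_pd_mul hv1 hvc hw.continuous i)
      (fun x _ => ((hv.contDiff_pd (m := 1) le_rfl i).differentiable one_ne_zero) x)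
      (fun x _ => (hw.differentiable one_ne_zero) x)
  simp only [ibp, pd_comm hv]

end PartialDerivatives

theorem contDiff_one_of_hasDerivAt {g b : ℝ → ℝ} (hg : ∀ t, HasDerivAt g (b t) t)
    (hb : Continuous b) : ContDiff ℝ 1 g :=
  contDiff_one_iff_deriv.2 ⟨fun t => (hg t).differentiableAt, by
    rwa [show deriv g = b from funext fun t => (hg t).deriv]⟩

theorem hasDerivAt_abs_rpow_mul_self {γ : ℝ} (hγ : 0 ≤ γ) (t : ℝ) :
    HasDerivAt (fun s => |s| ^ γ * s) ((γ + 1) * |t| ^ γ) t := by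
  rcases eq_or_ne t 0 with rfl | ht
  · rcases hγ.eq_or_lt with rfl | hγ
    · simpa using hasDerivAt_id' (0 : ℝ)
    rw [abs_zero, zero_rpow hγ.ne', mul_zero, hasDerivAt_iff_tendsto_slope_zero]
    have hcont : Filter.Tendsto (fun s : ℝ => |s| ^ γ) (nhdsWithin 0 {0}ᶜ) (nhds 0) := by
      simpa [zero_rpow hγ.ne'] using
        ((continuous_abs.rpow_const fun _ => Or.inr hγ.le).tendsto 0).mono_left nhdsWithin_le_nhds
    refine hcont.congr' (eventually_nhdsWithin_of_forall fun s hs => ?_)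
    simp [mul_comm s⁻¹, mul_inv_cancel_right₀ (Set.mem_compl_singleton_iff.1 hs)]
  · have h : HasDerivAt (fun s => |s| ^ γ * s) _ t :=
      ((hasDerivAt_abs ht).rpow_const (p := γ) (Or.inl (abs_ne_zero.2 ht))).mul (hasDerivAt_id' t)
    refine h.congr_deriv ?_
    have hsplit : |t| ^ γ = |t| ^ (γ - 1) * |t| := by
      rw [← rpow_add_one (abs_ne_zero.2 ht), sub_add_cancel]
    rw [hsplit, ← sign_mul_self t]
    ring

theorem integral_differentiated_euler_eq_zero {a b g : ℝ → ℝ} (hg : ∀ t, HasDerivAt g (b t) t)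
    (hb : Continuous b) {Ω : Set ℝ²} {u φ : ℝ² → ℝ} (hu : ContDiff ℝ 2 u)
    (heq : ∀ x ∈ Ω, a (pd 0 u x) * pd 0 (pd 0 u) x + b (pd 1 u x) * pd 1 (pd 1 u) x = 0)
    (hφ : ContDiff ℝ 2 φ) (hφc : HasCompactSupport φ) (hφΩ : tsupport φ ⊆ Ω) :
    ∫ x, (a (pd 0 u x) * pd 0 (pd 0 u) x * pd 0 φ x
      + b (pd 1 u x) * pd 1 (pd 0 u) x * pd 1 φ x) = 0 := by
  set P : ℝ² → ℝ := fun x => g (pd 1 u x)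
  have hu₁ : ContDiff ℝ 1 (pd 1 u) := hu.contDiff_pd le_rfl 1
  have hP : ContDiff ℝ 1 P := (contDiff_one_of_hasDerivAt hg hb).comp hu₁
  have hpdP : ∀ i x, pd i P x = b (pd 1 u x) * pd i (pd 1 u) x := fun i x =>
    (hg _).pd_comp (hu₁.differentiable one_ne_zero x) i
  have hφ₁ : ContDiff ℝ 1 φ := hφ.of_le (by norm_num)
  -- on `Ω` the Euler equation turns the integrand into a null Lagrangian for `φ` and `P`
  have hnull : ∀ x, a (pd 0 u x) * pd 0 (pd 0 u) x * pd 0 φ x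
      + b (pd 1 u x) * pd 1 (pd 0 u) x * pd 1 φ x = pd 1 φ x * pd 0 P x - pd 0 φ x * pd 1 P x := by
    intro x
    rw [hpdP, hpdP, pd_comm hu 0 1]
    by_cases hx : x ∈ tsupport φ
    · linear_combination pd 0 φ x * heq x (hφΩ hx)
    · simp [pd_eq_zero_of_notMem_tsupport hx]
  simp only [hnull]
  rw [integral_sub (integrable_pd_mul hφ₁ hφc (hP.continuous_pd 0) 1)
    (integrable_pd_mul hφ₁ hφc (hP.continuous_pd 1) 0), integral_pd_mul_pd_comm hφ hφc hP, sub_self]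

theorem pd_mul_pow_mul_one_add_sq_rpow {w η : ℝ² → ℝ} {x : ℝ²} (hw : DifferentiableAt ℝ w x)
    (hη : DifferentiableAt ℝ η x) (n : ℕ) (α : ℝ) (i : Fin 2) :
    pd i (fun y => w y * (η y ^ n * (1 + w y ^ 2) ^ α)) x
      = η x ^ n * (1 + w x ^ 2) ^ (α - 1) * (1 + (1 + 2 * α) * w x ^ 2) * pd i w x
        + n * w x * η x ^ (n - 1) * (1 + w x ^ 2) ^ α * pd i η x := by
  have hΓ : 0 < 1 + w x ^ 2 := by positivity
  have hsplit : (1 + w x ^ 2) ^ α = (1 + w x ^ 2) ^ (α - 1) * (1 + w x ^ 2) := by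
    rw [← rpow_add_one hΓ.ne', sub_add_cancel]
  have hΓα : HasDerivAt (fun t : ℝ => (1 + t ^ 2) ^ α)
      (2 * w x * α * (1 + w x ^ 2) ^ (α - 1)) (w x) := by
    simpa using ((hasDerivAt_pow 2 (w x)).const_add 1).rpow_const (p := α) (Or.inl hΓ.ne')
  have hηn : DifferentiableAt ℝ (fun y => η y ^ n) x := hη.pow n
  have hΓw : DifferentiableAt ℝ (fun y => (1 + w y ^ 2) ^ α) x := hΓα.differentiableAt.comp x hw
  rw [pd_fun_mul hw (hηn.fun_mul hΓw), pd_fun_mul hηn hΓw, (hasDerivAt_pow n (η x)).pd_comp hη i,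
    hΓα.pd_comp hw i, hsplit]
  ring

theorem neg_two_mul_le_young {A B x₁ x₂ y₁ y₂ ε : ℝ} (hA : 0 ≤ A) (hB : 0 ≤ B) (hε : 0 < ε) :
    -(2 * (A * x₁ * y₁ + B * x₂ * y₂))
      ≤ ε / 2 * (A * x₁ ^ 2 + B * x₂ ^ 2) + 2 / ε * (A * y₁ ^ 2 + B * y₂ ^ 2) := by
  have h₁ : 0 ≤ A * (ε * x₁ + 2 * y₁) ^ 2 := by positivity
  have h₂ : 0 ≤ B * (ε * x₂ + 2 * y₂) ^ 2 := by positivity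
  have key : ε / 2 * (A * x₁ ^ 2 + B * x₂ ^ 2) + 2 / ε * (A * y₁ ^ 2 + B * y₂ ^ 2)
      + 2 * (A * x₁ * y₁ + B * x₂ * y₂)
      = (A * (ε * x₁ + 2 * y₁) ^ 2 + B * (ε * x₂ + 2 * y₂) ^ 2) / (2 * ε) := by
    field_simp
    ring
  linarith [div_nonneg (add_nonneg h₁ h₂) (by positivity : (0:ℝ) ≤ 2 * ε)]

theorem caccioppoli_pointwise {A B w p q e₁ e₂ t α ε : ℝ} {l : ℕ} (hl : 1 ≤ l) (hA : 0 ≤ A)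
    (hB : 0 ≤ B) (hε : 0 < ε) (hε₁ : ε ≤ 1) (hεα : ε ≤ 1 + 2 * α) :
    ε / 2 * ((A * p ^ 2 + B * q ^ 2) * t ^ (2 * l) * (1 + w ^ 2) ^ α)
      ≤ 2 * l ^ 2 / ε * ((A * e₁ ^ 2 + B * e₂ ^ 2) * t ^ (2 * l - 2) * (1 + w ^ 2) ^ (α + 1))
        + (A * p * (t ^ (2 * l) * (1 + w ^ 2) ^ (α - 1) * (1 + (1 + 2 * α) * w ^ 2) * p
              + 2 * l * w * t ^ (2 * l - 1) * (1 + w ^ 2) ^ α * e₁)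
          + B * q * (t ^ (2 * l) * (1 + w ^ 2) ^ (α - 1) * (1 + (1 + 2 * α) * w ^ 2) * q
              + 2 * l * w * t ^ (2 * l - 1) * (1 + w ^ 2) ^ α * e₂)) := by
  obtain ⟨m, rfl⟩ : ∃ m, l = m + 1 := ⟨l - 1, by omega⟩
  set Γ := 1 + w ^ 2
  set G := Γ ^ (α - 1)
  have hΓ : 0 < Γ := by positivity
  have hG : 0 ≤ G := by positivity
  have hΓα : Γ ^ α = G * Γ := by rw [← rpow_add_one hΓ.ne', sub_add_cancel]
  have hΓα₁ : Γ ^ (α + 1) = G * Γ ^ 2 := by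
    rw [← rpow_natCast, ← rpow_add hΓ]; push_cast; ring_nf
  have ht₀ : t ^ (2 * (m + 1)) = (t ^ (m + 1)) ^ 2 := by ring
  have ht₁ : t ^ (2 * (m + 1) - 1) = t ^ (m + 1) * t ^ m := by rw [← pow_add]; congr 1; omega
  have ht₂ : t ^ (2 * (m + 1) - 2) = (t ^ m) ^ 2 := by rw [← pow_mul]; congr 1; omega
  have hyoung := neg_two_mul_le_young (x₁ := t ^ (m + 1) * p) (x₂ := t ^ (m + 1) * q)
    (y₁ := (m + 1) * w * t ^ m * e₁) (y₂ := (m + 1) * w * t ^ m * e₂) hA hB hε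
  have hcoercive : ε * Γ ≤ 1 + (1 + 2 * α) * w ^ 2 := by nlinarith [sq_nonneg w]
  rw [ht₀, ht₁, ht₂, hΓα, hΓα₁]
  push_cast
  linear_combination mul_le_mul_of_nonneg_left hyoung (by positivity : 0 ≤ G * Γ)
    + mul_le_mul_of_nonneg_right hcoercive
      (by positivity : 0 ≤ G * (t ^ (m + 1)) ^ 2 * (A * p ^ 2 + B * q ^ 2))
    + mul_le_mul_of_nonneg_right (by linarith : w ^ 2 ≤ Γ)
      (by positivity : 0 ≤ 2 * (m + 1) ^ 2 / ε * G * Γ * (t ^ m) ^ 2 * (A * e₁ ^ 2 + B * e₂ ^ 2))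

theorem caccioppoli_integrand_le {w η : ℝ² → ℝ} {x : ℝ²} (hw : DifferentiableAt ℝ w x)
    (hη : DifferentiableAt ℝ η x) {A B α ε : ℝ} {l : ℕ} (hl : 1 ≤ l) (hA : 0 ≤ A) (hB : 0 ≤ B)
    (hε : 0 < ε) (hε₁ : ε ≤ 1) (hεα : ε ≤ 1 + 2 * α) :
    ε / 2 * ((A * pd 0 w x ^ 2 + B * pd 1 w x ^ 2) * η x ^ (2 * l) * (1 + w x ^ 2) ^ α)
      ≤ 2 * l ^ 2 / ε
          * ((A * pd 0 η x ^ 2 + B * pd 1 η x ^ 2) * η x ^ (2 * l - 2) * (1 + w x ^ 2) ^ (α + 1))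
        + (A * pd 0 w x * pd 0 (fun y => w y * (η y ^ (2 * l) * (1 + w y ^ 2) ^ α)) x
          + B * pd 1 w x * pd 1 (fun y => w y * (η y ^ (2 * l) * (1 + w y ^ 2) ^ α)) x) := by
  rw [pd_mul_pow_mul_one_add_sq_rpow hw hη, pd_mul_pow_mul_one_add_sq_rpow hw hη]
  push_cast
  linarith [caccioppoli_pointwise (w := w x) (p := pd 0 w x) (q := pd 1 w x) (e₁ := pd 0 η x)
    (e₂ := pd 1 η x) (t := η x) hl hA hB hε hε₁ hεα]

theorem integral_le_of_le_add_of_integral_eq_zero {X : Type*} [MeasurableSpace X] {μ : Measure X}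
    {L R I : X → ℝ} {c : ℝ} (hL : Integrable L μ) (hR : Integrable R μ) (hI : Integrable I μ)
    (hle : ∀ x, c * L x ≤ R x + I x) (hI₀ : ∫ x, I x ∂μ = 0) :
    c * ∫ x, L x ∂μ ≤ ∫ x, R x ∂μ := by
  rw [← integral_const_mul, ← add_zero (∫ x, R x ∂μ), ← hI₀, ← integral_add hR hI]
  exact integral_mono (hL.const_mul c) (hR.add hI) hle

theorem setIntegral_caccioppoli_le {a b g : ℝ → ℝ} (ha : Continuous a) (ha₀ : ∀ t, 0 ≤ a t)
    (hg : ∀ t, HasDerivAt g (b t) t) (hb : Continuous b) (hb₀ : ∀ t, 0 ≤ b t)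
    {Ω : Set ℝ²} {u η : ℝ² → ℝ} (hu : ContDiff ℝ ∞ u)
    (heq : ∀ x ∈ Ω, a (pd 0 u x) * pd 0 (pd 0 u) x + b (pd 1 u x) * pd 1 (pd 1 u) x = 0)
    (hη : ContDiff ℝ ∞ η) (hηc : HasCompactSupport η) (hηΩ : tsupport η ⊆ Ω)
    {l : ℕ} (hl : 1 ≤ l) {α ε : ℝ} (hε : 0 < ε) (hε₁ : ε ≤ 1) (hεα : ε ≤ 1 + 2 * α) :
    ∫ x in Ω, (a (pd 0 u x) * (pd 0 (pd 0 u) x) ^ 2 + b (pd 1 u x) * (pd 1 (pd 0 u) x) ^ 2)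
        * η x ^ (2 * l) * (1 + (pd 0 u x) ^ 2) ^ α
      ≤ 4 * l ^ 2 / ε ^ 2 * ∫ x in Ω, (a (pd 0 u x) * (pd 0 η x) ^ 2
        + b (pd 1 u x) * (pd 1 η x) ^ 2) * η x ^ (2 * l - 2) * (1 + (pd 0 u x) ^ 2) ^ (α + 1) := by
  set w := pd 0 u
  have hw : ContDiff ℝ ∞ w := hu.contDiff_pd (by exact_mod_cast le_top) 0
  have hΓ : ∀ β : ℝ, ContDiff ℝ ∞ fun y => (1 + w y ^ 2) ^ β := fun β =>
    (contDiff_const.add (hw.pow 2)).rpow_const_of_ne fun y => by positivity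
  set χ : ℝ² → ℝ := fun y => w y * (η y ^ (2 * l) * (1 + w y ^ 2) ^ α)
  have hχ : ContDiff ℝ ∞ χ := hw.mul ((hη.pow _).mul (hΓ α))
  have hχη : tsupport χ ⊆ tsupport η := closure_mono fun y hy hy₀ => hy (by
    simp [χ, hy₀, zero_pow (by omega : 2 * l ≠ 0)])
  have hI₀ := integral_differentiated_euler_eq_zero hg hb (hu.of_le (by norm_cast)) heq
    (hχ.of_le (by norm_cast)) (hηc.of_isClosed_subset (isClosed_tsupport _) hχη) (hχη.trans hηΩ)
  -- `hcpd` and `hΓc` are not referenced by name: `fun_prop` picks them up below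
  have hcpd : ∀ {v : ℝ² → ℝ}, ContDiff ℝ ∞ v → ∀ i, Continuous (pd i v) := fun hv i =>
    (hv.of_le (by norm_cast)).continuous_pd i
  have hΓc : ∀ β : ℝ, Continuous fun y => (1 + w y ^ 2) ^ β := fun β => (hΓ β).continuous
  have hvanish : ∀ i x, x ∉ tsupport η → pd i χ x = 0 := fun i x hx =>
    pd_eq_zero_of_notMem_tsupport (fun h => hx (hχη h)) i
  have hL : Integrable fun x => (a (w x) * (pd 0 w x) ^ 2 + b (pd 1 u x) * (pd 1 w x) ^ 2)
      * η x ^ (2 * l) * (1 + w x ^ 2) ^ α :=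
    (by fun_prop : Continuous _).integrable_of_hasCompactSupport (.intro hηc fun x hx => by
      simp [image_eq_zero_of_notMem_tsupport hx, zero_pow (by omega : 2 * l ≠ 0)])
  have hR : Integrable fun x => (a (w x) * (pd 0 η x) ^ 2 + b (pd 1 u x) * (pd 1 η x) ^ 2)
      * η x ^ (2 * l - 2) * (1 + w x ^ 2) ^ (α + 1) :=
    (by fun_prop : Continuous _).integrable_of_hasCompactSupport (.intro hηc fun x hx => by
      simp [pd_eq_zero_of_notMem_tsupport hx])
  have hI : Integrable fun x =>
      a (w x) * pd 0 w x * pd 0 χ x + b (pd 1 u x) * pd 1 w x * pd 1 χ x :=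
    (by fun_prop : Continuous _).integrable_of_hasCompactSupport (.intro hηc fun x hx => by
      simp [hvanish _ x hx])
  have hIΩ :
      ∫ x in Ω, (a (w x) * pd 0 w x * pd 0 χ x + b (pd 1 u x) * pd 1 w x * pd 1 χ x) = 0 := by
    rwa [setIntegral_eq_integral_of_forall_compl_eq_zero fun x hx => by
      simp [hvanish _ x fun h => hx (hηΩ h)]]
  have key := integral_le_of_le_add_of_integral_eq_zero hL.integrableOn
    (hR.const_mul (2 * l ^ 2 / ε)).integrableOn hI.integrableOn (fun x =>
      caccioppoli_integrand_le (hw.differentiable (by simp) x) (hη.differentiable (by simp) x) hl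
        (ha₀ _) (hb₀ _) hε hε₁ hεα) hIΩ
  rw [integral_const_mul] at key
  rw [show 4 * (l : ℝ) ^ 2 / ε ^ 2 = (ε / 2)⁻¹ * (2 * l ^ 2 / ε) by field_simp; ring, mul_assoc,
    le_inv_mul_iff₀ (by positivity)]
  exact key

theorem caccioppoli_negative_exponents_general
    (Ω : Set (EuclideanSpace ℝ (Fin 2)))
    (f₁ f₂ : ℝ → ℝ) (hf₁ : ContDiff ℝ 2 f₁) (hf₂ : ContDiff ℝ 2 f₂)
    (c₁ c₂ cb₁ cb₂ μ₁ μ₂ γ : ℝ)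
    (hc₁ : 0 < c₁) (hc₂ : 0 < c₂)
    (hγ₀ : 0 ≤ γ)
    (hell₁ : ∀ t : ℝ, c₁ * (1 + |t|) ^ (-μ₁) ≤ deriv (deriv f₁) t ∧ deriv (deriv f₁) t ≤ cb₁)
    (hell₂ : ∀ t : ℝ, c₂ * (1 + |t|) ^ (-μ₂) ≤ deriv (deriv f₂) t ∧
      deriv (deriv f₂) t ≤ cb₂ * (1 + |t|) ^ γ)
    (l : ℕ) (hl : 1 ≤ l) (α : ℝ) (hα : -(1/2) < α) :
    ∃ c : ℝ, 0 < c ∧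
      ∀ (δ : ℝ), 0 < δ → δ ≤ 1 →
      ∀ (u : EuclideanSpace ℝ (Fin 2) → ℝ), ContDiff ℝ (⊤ : ℕ∞) u →
      (∀ x ∈ Ω, (δ + deriv (deriv f₁) (pd 0 u x)) * pd 0 (pd 0 u) x
          + (δ * (γ + 1) * |pd 1 u x| ^ γ + deriv (deriv f₂) (pd 1 u x))
            * pd 1 (pd 1 u) x = 0) →
      ∀ (η : EuclideanSpace ℝ (Fin 2) → ℝ), ContDiff ℝ (⊤ : ℕ∞) η →
        HasCompactSupport η → tsupport η ⊆ Ω →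
        (∀ x, 0 ≤ η x) → (∀ x, η x ≤ 1) →
      (∫ x in Ω,
          ((δ + deriv (deriv f₁) (pd 0 u x)) * (pd 0 (pd 0 u) x) ^ 2
            + (δ * (γ + 1) * |pd 1 u x| ^ γ + deriv (deriv f₂) (pd 1 u x))
              * (pd 1 (pd 0 u) x) ^ 2)
          * η x ^ (2 * l) * (1 + (pd 0 u x) ^ 2) ^ α)
      ≤ c * ∫ x in Ω,
          ((δ + deriv (deriv f₁) (pd 0 u x)) * (pd 0 η x) ^ 2
            + (δ * (γ + 1) * |pd 1 u x| ^ γ + deriv (deriv f₂) (pd 1 u x))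
              * (pd 1 η x) ^ 2)
          * η x ^ (2 * l - 2) * (1 + (pd 0 u x) ^ 2) ^ (α + 1) := by
  set ε := min 1 (1 + 2 * α)
  have hε : 0 < ε := lt_min one_pos (by linarith)
  refine ⟨4 * l ^ 2 / ε ^ 2, by positivity, fun δ hδ _ u hu heq η hη hηc hηΩ _ _ => ?_⟩
  have hf₁'' : 0 ≤ deriv (deriv f₁) := fun t =>
    (mul_pos hc₁ (rpow_pos_of_pos (by positivity) _)).le.trans (hell₁ t).1
  have hf₂'' : 0 ≤ deriv (deriv f₂) := fun t =>
    (mul_pos hc₂ (rpow_pos_of_pos (by positivity) _)).le.trans (hell₂ t).1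
  exact setIntegral_caccioppoli_le (a := fun t => δ + deriv (deriv f₁) t)
    (b := fun t => δ * (γ + 1) * |t| ^ γ + deriv (deriv f₂) t)
    (g := fun t => δ * (|t| ^ γ * t) + deriv f₂ t)
    (continuous_const.add (hf₁.deriv' (n := 1)).continuous_deriv_one)
    (fun t => add_nonneg hδ.le (hf₁'' t))
    (fun t => (((hasDerivAt_abs_rpow_mul_self hγ₀ t).const_mul δ).add
      (hf₂.differentiable_deriv_two t).hasDerivAt).congr_deriv (by ring))
    (((continuous_abs.rpow_const fun _ => Or.inr hγ₀).const_mul _).add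
      (hf₂.deriv' (n := 1)).continuous_deriv_one)
    (fun t => add_nonneg (by positivity) (hf₂'' t))
    hu heq hη hηc hηΩ hl hε (min_le_left _ _) (min_le_right _ _)

/-- Caccioppoli-type inequality with negative exponents: in the modified
splitting setting (with `f_{1,δ}'' = δ + f₁''` and `f_{2,δ}''(t) = δ(γ+1)|t|^γ + f₂''(t)`),
for every `l ≥ 1` and `α > -1/2` there is `c = c(α,l) > 0`, independent of `δ`, `u`, `η`,
such that `∫ D²f_δ(∇u)(∇∂₁u,∇∂₁u) η^{2l} Γ₁^α ≤ c ∫ D²f_δ(∇u)(∇η,∇η) η^{2l-2} Γ₁^{α+1}`. -/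
theorem caccioppoli_negative_exponents
    (Ω : Set (EuclideanSpace ℝ (Fin 2))) (hΩo : IsOpen Ω) (hΩb : Bornology.IsBounded Ω)
    (f₁ f₂ : ℝ → ℝ) (hf₁ : ContDiff ℝ 2 f₁) (hf₂ : ContDiff ℝ 2 f₂)
    (c₁ c₂ cb₁ cb₂ μ₁ μ₂ γ : ℝ)
    (hc₁ : 0 < c₁) (hc₂ : 0 < c₂) (hcb₁ : 0 < cb₁) (hcb₂ : 0 < cb₂)
    (hμ₁ : 1 < μ₁) (hμ₂ : 1 < μ₂) (hμ₁' : μ₁ < 2)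
    (hγ₀ : 0 ≤ γ) (hγ : γ < (2 - μ₁) / (1 + (2 - μ₁)))
    (hell₁ : ∀ t : ℝ, c₁ * (1 + |t|) ^ (-μ₁) ≤ deriv (deriv f₁) t ∧ deriv (deriv f₁) t ≤ cb₁)
    (hell₂ : ∀ t : ℝ, c₂ * (1 + |t|) ^ (-μ₂) ≤ deriv (deriv f₂) t ∧
      deriv (deriv f₂) t ≤ cb₂ * (1 + |t|) ^ γ)
    (l : ℕ) (hl : 1 ≤ l) (α : ℝ) (hα : -(1/2) < α) :
    ∃ c : ℝ, 0 < c ∧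
      ∀ (δ : ℝ), 0 < δ → δ ≤ 1 →
      ∀ (u : EuclideanSpace ℝ (Fin 2) → ℝ), ContDiff ℝ (⊤ : ℕ∞) u →
      (∀ x ∈ Ω, (δ + deriv (deriv f₁) (pd 0 u x)) * pd 0 (pd 0 u) x
          + (δ * (γ + 1) * |pd 1 u x| ^ γ + deriv (deriv f₂) (pd 1 u x))
            * pd 1 (pd 1 u) x = 0) →
      ∀ (η : EuclideanSpace ℝ (Fin 2) → ℝ), ContDiff ℝ (⊤ : ℕ∞) η →
        HasCompactSupport η → tsupport η ⊆ Ω →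
        (∀ x, 0 ≤ η x) → (∀ x, η x ≤ 1) →
      (∫ x in Ω,
          ((δ + deriv (deriv f₁) (pd 0 u x)) * (pd 0 (pd 0 u) x) ^ 2
            + (δ * (γ + 1) * |pd 1 u x| ^ γ + deriv (deriv f₂) (pd 1 u x))
              * (pd 1 (pd 0 u) x) ^ 2)
          * η x ^ (2 * l) * (1 + (pd 0 u x) ^ 2) ^ α)
      ≤ c * ∫ x in Ω,
          ((δ + deriv (deriv f₁) (pd 0 u x)) * (pd 0 η x) ^ 2
            + (δ * (γ + 1) * |pd 1 u x| ^ γ + deriv (deriv f₂) (pd 1 u x))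
              * (pd 1 η x) ^ 2)
          * η x ^ (2 * l - 2) * (1 + (pd 0 u x) ^ 2) ^ (α + 1) :=
  caccioppoli_negative_exponents_general Ω f₁ f₂ hf₁ hf₂ c₁ c₂ cb₁ cb₂ μ₁ μ₂ γ hc₁ hc₂ hγ₀ hell₁
    hell₂ l hl α hα
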